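/- Let u₁, u₂ solve D_{*,t}^α u = ν Δₓ u + F(x,t,u) in Ω = G × (1,T] with the same boundary condition and initial data g₁(x), g₂(x) respectively, where F is C¹ and nonincreasing in u. Then ‖u₁ − u₂‖_{C(closure of Ω)} ≤ ‖g₁ − g₂‖_{C(Ḡ)}. -/

import Mathlib

/-!
Weak maximum principle for `w = u₁ - u₂`. If `w` exceeded `sup |g₁ - g₂|` on the closed cylinder,
it would attain its maximum at some `(x₀, t₀)` with `x₀ ∈ G` and `t₀ > 1`, because `w` vanishes on
the lateral boundary. There `Δw ≤ 0` and `F(u₁) - F(u₂) ≤ 0`, while the Caputo–Hadamard derivative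
of `w` is at least `(log t₀) ^ (-α) (w(x₀, t₀) - w(x₀, 1)) / Γ(1 - α) > 0`, contradicting the
equation. The same argument applied to `u₂ - u₁` gives the other half of the absolute value.
-/

open Real MeasureTheory Set

/-- Caputo–Hadamard fractional derivative in the time variable, base point `1`. -/
noncomputable def caputoHadamardT {n : ℕ} (α : ℝ) (u : (Fin n → ℝ) → ℝ → ℝ)
    (x : Fin n → ℝ) (t : ℝ) : ℝ :=
  (1 / Real.Gamma (1 - α)) * ∫ s in (1:ℝ)..t, (Real.log (t / s)) ^ (-α) * deriv (u x) s

/-- Laplacian in the space variable. -/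
noncomputable def laplacianX {n : ℕ} (u : (Fin n → ℝ) → ℝ → ℝ) (x : Fin n → ℝ) (t : ℝ) : ℝ :=
  ∑ j : Fin n, iteratedDeriv 2 (fun z => u (Function.update x j z) t) (x j)

/-- `u` is a classical solution of the nonlinear Caputo–Hadamard time-fractional
diffusion problem with nonlinearity `F`, initial data `φ` and boundary data `ψ`. -/
def IsSolutionNonlinearCH {n : ℕ} (G : Set (Fin n → ℝ)) (T ν α : ℝ)
    (u : (Fin n → ℝ) → ℝ → ℝ) (F : (Fin n → ℝ) → ℝ → ℝ → ℝ)
    (φ : (Fin n → ℝ) → ℝ) (ψ : (Fin n → ℝ) → ℝ → ℝ) : Prop :=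
  ContinuousOn (fun p : (Fin n → ℝ) × ℝ => u p.1 p.2) (closure G ×ˢ Set.Icc 1 T) ∧
  (∀ x ∈ G, ContDiffOn ℝ 1 (u x) (Set.Icc 1 T)) ∧
  (∀ t ∈ Set.Ioc (1:ℝ) T, ContDiffOn ℝ 2 (fun x => u x t) G) ∧
  (∀ x ∈ G, ∀ t ∈ Set.Ioc (1:ℝ) T,
      caputoHadamardT α u x t = ν * laplacianX u x t + F x t (u x t)) ∧
  (∀ x ∈ closure G, u x 1 = φ x) ∧
  (∀ x ∈ frontier G, ∀ t ∈ Set.Icc (1:ℝ) T, u x t = ψ x t)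

open Filter Topology

section Kernel

variable {α a t : ℝ}

theorem rpow_neg_log_div_le (hα : 0 ≤ α) {s : ℝ} (hs : 0 < s) (hst : s < t) :
    log (t / s) ^ (-α) ≤ t ^ α * (t - s) ^ (-α) := by
  have ht : 0 < t := hs.trans hst
  have hlog : (t - s) / t ≤ log (t / s) := by
    simpa [field] using one_sub_inv_le_log_of_pos (div_pos ht hs)
  calc log (t / s) ^ (-α) ≤ ((t - s) / t) ^ (-α) :=
        rpow_le_rpow_of_nonpos (div_pos (sub_pos.2 hst) ht) hlog (neg_nonpos.2 hα)
    _ = t ^ α * (t - s) ^ (-α) := by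
        rw [div_rpow (sub_pos.2 hst).le ht.le, rpow_neg ht.le, div_inv_eq_mul, mul_comm]

theorem intervalIntegrable_rpow_neg_log_div (hα0 : 0 ≤ α) (hα1 : α < 1) (ha : 0 < a)
    (hat : a ≤ t) : IntervalIntegrable (fun s => log (t / s) ^ (-α)) volume a t := by
  have hdom : IntervalIntegrable (fun s => t ^ α * (t - s) ^ (-α)) volume a t := by
    simpa using ((intervalIntegral.intervalIntegrable_rpow' (r := -α) (by linarith)).comp_sub_left
      (a := t - a) (b := t - t) t).const_mul (t ^ α)
  refine hdom.mono_fun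
    ((measurable_const.div measurable_id).log.pow_const _).aestronglyMeasurable ?_
  rw [uIoc_of_le hat, ← Measure.restrict_congr_set Ioo_ae_eq_Ioc]
  filter_upwards [ae_restrict_mem measurableSet_Ioo] with s ⟨has, hst⟩
  have hlog : 0 ≤ log (t / s) := (log_pos ((one_lt_div (ha.trans has)).2 hst)).le
  rw [norm_of_nonneg (rpow_nonneg hlog _),
    norm_of_nonneg (mul_nonneg (rpow_nonneg (by linarith) _) (rpow_nonneg (by linarith) _))]
  exact rpow_neg_log_div_le hα0 (ha.trans has) hst

theorem hasDerivAt_rpow_neg_log_div {s : ℝ} (hs : 0 < s) (hst : s < t) :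
    HasDerivAt (fun y => log (t / y) ^ (-α)) (α / s * log (t / s) ^ (-α - 1)) s := by
  have ht : 0 < t := hs.trans hst
  have hlog : HasDerivAt (fun y => log (t / y)) (-s⁻¹) s := by
    have := ((hasDerivAt_log hs.ne').const_sub (log t))
    refine (this.congr_of_eventuallyEq ?_).congr_deriv (by ring)
    filter_upwards [eventually_gt_nhds hs] with y hy
    rw [log_div ht.ne' hy.ne']
  convert hlog.rpow_const (p := -α) (Or.inl (log_pos ((one_lt_div hs).2 hst)).ne') using 1
  field_simp

theorem tendsto_rpow_neg_log_div_mul_nhdsLT (hα0 : 0 ≤ α) (hα1 : α < 1) (ht : 0 < t)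
    {v : ℝ → ℝ} {C : ℝ} (hv : ∀ᶠ s in 𝓝[<] t, |v s| ≤ C * (t - s)) :
    Tendsto (fun s => log (t / s) ^ (-α) * v s) (𝓝[<] t) (𝓝 0) := by
  have hbound : Tendsto (fun s => C * t ^ α * (t - s) ^ (1 - α)) (𝓝[<] t) (𝓝 0) := by
    have : ContinuousAt (fun s => C * t ^ α * (t - s) ^ (1 - α)) t :=
      continuousAt_const.mul ((continuousAt_const.sub continuousAt_id).rpow_const
        (Or.inr (by linarith)))
    simpa [zero_rpow (by linarith : 1 - α ≠ 0)] using this.tendsto.mono_left nhdsWithin_le_nhds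
  refine squeeze_zero_norm' ?_ hbound
  filter_upwards [hv, Ioo_mem_nhdsLT ht, self_mem_nhdsWithin] with s hvs hs hst
  replace hs : 0 < s := hs.1
  replace hst : s < t := hst
  have hk := rpow_neg_log_div_le hα0 hs hst
  have hk0 : 0 ≤ log (t / s) ^ (-α) := rpow_nonneg (log_pos ((one_lt_div hs).2 hst)).le _
  have hts : (t - s) ^ (1 - α) = (t - s) ^ (-α) * (t - s) := by
    rw [← rpow_add_one (sub_pos.2 hst).ne', neg_add_eq_sub]
  rw [norm_mul, norm_of_nonneg hk0, norm_eq_abs, hts]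
  calc log (t / s) ^ (-α) * |v s| ≤ t ^ α * (t - s) ^ (-α) * (C * (t - s)) :=
        mul_le_mul hk hvs (abs_nonneg _) (hk0.trans hk)
    _ = C * t ^ α * ((t - s) ^ (-α) * (t - s)) := by ring

theorem continuousOn_rpow_neg_log_div_mul_sub (hα0 : 0 ≤ α) (hα1 : α < 1) (ha : 0 < a)
    (hat : a < t) {f : ℝ → ℝ} {K : NNReal} (hf : LipschitzOnWith K f (Icc a t)) :
    ContinuousOn (fun s => log (t / s) ^ (-α) * (f s - f t)) (Icc a t) := by
  intro s hs
  rcases hs.2.lt_or_eq with hst | rfl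
  · exact (hasDerivAt_rpow_neg_log_div (ha.trans_le hs.1) hst).continuousAt.continuousWithinAt.mul
      ((hf.continuousOn s hs).sub continuousWithinAt_const)
  · refine (continuousWithinAt_Iio_iff_Iic.1 ?_).mono Icc_subset_Iic_self
    have hlip : ∀ᶠ r in 𝓝[<] s, |f r - f s| ≤ K * (s - r) := by
      filter_upwards [Ioo_mem_nhdsLT hat] with r hr
      have := hf.dist_le_mul r (Ioo_subset_Icc_self hr) s (right_mem_Icc.2 hat.le)
      rwa [Real.dist_eq, Real.dist_eq, abs_sub_comm r, abs_of_pos (sub_pos.2 hr.2)] at this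
    simpa [ContinuousWithinAt] using
      tendsto_rpow_neg_log_div_mul_nhdsLT hα0 hα1 (ha.trans hat) hlip

theorem derivWithin_Icc_ae_eq_deriv (f : ℝ → ℝ) {a b : ℝ} (hab : a ≤ b) :
    derivWithin f (Icc a b) =ᵐ[volume.restrict (uIoc a b)] deriv f := by
  rw [uIoc_of_le hab, ← Measure.restrict_congr_set Ioo_ae_eq_Ioc]
  filter_upwards [ae_restrict_mem measurableSet_Ioo] with s hs
  exact derivWithin_of_mem_nhds (Icc_mem_nhds hs.1 hs.2)

theorem intervalIntegrable_rpow_neg_log_div_mul_deriv (hα0 : 0 ≤ α) (hα1 : α < 1) (ha : 0 < a)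
    (hat : a < t) {f : ℝ → ℝ} (hf : ContDiffOn ℝ 1 f (Icc a t)) :
    IntervalIntegrable (fun s => log (t / s) ^ (-α) * deriv f s) volume a t := by
  have hf' := hf.continuousOn_derivWithin (uniqueDiffOn_Icc hat) le_rfl
  refine ((intervalIntegrable_rpow_neg_log_div hα0 hα1 ha hat.le).mul_continuousOn
    (by rwa [uIcc_of_le hat.le])).congr_ae ?_
  filter_upwards [derivWithin_Icc_ae_eq_deriv f hat.le] with s hs
  rw [hs]

/-- Integrating by parts against `(f s - f t) (log (t / s) ^ (-α) - log (t / a) ^ (-α))`, whose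
derivative is at most the integrand because the kernel increases and `f ≤ f t`; the boundary
term at `t` vanishes since `f s - f t = O(t - s)` beats `log (t / s) ^ (-α) = O((t - s) ^ (-α))`. -/
theorem mul_sub_le_integral_rpow_neg_log_div_mul_deriv (hα0 : 0 ≤ α) (hα1 : α < 1) (ha : 0 < a)
    (hat : a < t) {f : ℝ → ℝ} (hf : ContDiffOn ℝ 1 f (Icc a t))
    (hmax : ∀ s ∈ Icc a t, f s ≤ f t) :
    log (t / a) ^ (-α) * (f t - f a) ≤ ∫ s in a..t, log (t / s) ^ (-α) * deriv f s := by
  set k : ℝ → ℝ := fun s => log (t / s) ^ (-α)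
  set c := k a
  set f' := derivWithin f (Icc a t)
  have hf' : ContinuousOn f' (uIcc a t) := by
    rw [uIcc_of_le hat.le]; exact hf.continuousOn_derivWithin (uniqueDiffOn_Icc hat) le_rfl
  have hderiv : ∀ s ∈ Ioo a t, HasDerivAt f (f' s) s := fun s hs => by
    have hmem : Icc a t ∈ 𝓝 s := Icc_mem_nhds hs.1 hs.2
    rw [show f' s = deriv f s from derivWithin_of_mem_nhds hmem]
    exact ((hf.differentiableOn one_ne_zero s (Ioo_subset_Icc_self hs)).differentiableAt
      hmem).hasDerivAt
  have hkf' : IntervalIntegrable (fun s => k s * f' s) volume a t :=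
    (intervalIntegrable_rpow_neg_log_div hα0 hα1 ha hat.le).mul_continuousOn hf'
  have hcf' : IntervalIntegrable (fun s => c * f' s) volume a t :=
    hf'.intervalIntegrable.const_mul c
  have hftc : ∫ s in a..t, f' s = f t - f a :=
    intervalIntegral.integral_eq_sub_of_hasDeriv_right_of_le hat.le hf.continuousOn
      (fun s hs => (hderiv s hs).hasDerivWithinAt) hf'.intervalIntegrable
  obtain ⟨K, hK⟩ := hf.exists_lipschitzOnWith one_ne_zero (convex_Icc a t) isCompact_Icc
  have hP : ContinuousOn (fun s => (k s - c) * (f s - f t)) (Icc a t) := by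
    exact ((continuousOn_rpow_neg_log_div_mul_sub hα0 hα1 ha hat hK).sub
      ((continuousOn_const (c := c)).mul (hf.continuousOn.sub continuousOn_const))).congr
      fun s _ => sub_mul _ _ _
  have hP' : ∀ s ∈ Ioo a t, HasDerivWithinAt (fun s => (k s - c) * (f s - f t))
      (α / s * log (t / s) ^ (-α - 1) * (f s - f t) + (k s - c) * f' s) (Ioi s) s :=
    fun s hs => (((hasDerivAt_rpow_neg_log_div (ha.trans hs.1) hs.2).sub_const c).mul
      ((hderiv s hs).sub_const (f t))).hasDerivWithinAt
  have hle : ∀ s ∈ Ioo a t,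
      α / s * log (t / s) ^ (-α - 1) * (f s - f t) + (k s - c) * f' s ≤ (k s - c) * f' s := by
    intro s hs
    have hs0 : 0 < s := ha.trans hs.1
    have hlog : 0 ≤ log (t / s) := (log_pos ((one_lt_div hs0).2 hs.2)).le
    have : α / s * log (t / s) ^ (-α - 1) * (f s - f t) ≤ 0 :=
      mul_nonpos_of_nonneg_of_nonpos (by have := rpow_nonneg hlog (-α - 1); positivity)
        (sub_nonpos.2 (hmax s (Ioo_subset_Icc_self hs)))
    linarith
  have hφ : IntegrableOn (fun s => (k s - c) * f' s) (Icc a t) := by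
    rw [← intervalIntegrable_iff_integrableOn_Icc_of_le hat.le]
    simpa only [sub_mul] using hkf'.sub hcf'
  have key := intervalIntegral.sub_le_integral_of_hasDeriv_right_of_le hat.le hP hP' hφ hle
  have hcongr : ∫ s in a..t, k s * deriv f s = ∫ s in a..t, k s * f' s := by
    refine intervalIntegral.integral_congr_ae_restrict ?_
    filter_upwards [derivWithin_Icc_ae_eq_deriv f hat.le] with s hs
    rw [← hs]
  simp only [sub_self, mul_zero, sub_mul] at key
  rw [intervalIntegral.integral_sub hkf' hcf', intervalIntegral.integral_const_mul, hftc] at key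
  show c * (f t - f a) ≤ ∫ s in a..t, k s * deriv f s
  linarith

end Kernel

theorem caputoHadamardT_sub {n : ℕ} {α t : ℝ} {u v : (Fin n → ℝ) → ℝ → ℝ} {x : Fin n → ℝ}
    (hα0 : 0 ≤ α) (hα1 : α < 1) (ht : 1 < t) (hu : ContDiffOn ℝ 1 (u x) (Icc 1 t))
    (hv : ContDiffOn ℝ 1 (v x) (Icc 1 t)) :
    caputoHadamardT α (fun y s => u y s - v y s) x t =
      caputoHadamardT α u x t - caputoHadamardT α v x t := by
  unfold caputoHadamardT
  rw [← mul_sub, ← intervalIntegral.integral_sub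
    (intervalIntegrable_rpow_neg_log_div_mul_deriv hα0 hα1 one_pos ht hu)
    (intervalIntegrable_rpow_neg_log_div_mul_deriv hα0 hα1 one_pos ht hv)]
  congr 1
  refine intervalIntegral.integral_congr_ae_restrict ?_
  rw [uIoc_of_le ht.le, ← Measure.restrict_congr_set Ioo_ae_eq_Ioc]
  filter_upwards [ae_restrict_mem measurableSet_Ioo] with s hs
  have hmem : Icc 1 t ∈ 𝓝 s := Icc_mem_nhds hs.1 hs.2
  rw [← mul_sub, deriv_fun_sub
    ((hu.differentiableOn one_ne_zero s (Ioo_subset_Icc_self hs)).differentiableAt hmem)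
    ((hv.differentiableOn one_ne_zero s (Ioo_subset_Icc_self hs)).differentiableAt hmem)]

theorem caputoHadamardT_pos_of_isMaxOn {n : ℕ} {α t : ℝ} {u : (Fin n → ℝ) → ℝ → ℝ}
    {x : Fin n → ℝ} (hα0 : 0 ≤ α) (hα1 : α < 1) (ht : 1 < t)
    (hu : ContDiffOn ℝ 1 (u x) (Icc 1 t)) (hmax : IsMaxOn (u x) (Icc 1 t) t)
    (hlt : u x 1 < u x t) : 0 < caputoHadamardT α u x t := by
  have hlower := mul_sub_le_integral_rpow_neg_log_div_mul_deriv hα0 hα1 one_pos ht hu hmax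
  rw [div_one] at hlower
  have hΓ : 0 < Gamma (1 - α) := Gamma_pos_of_pos (by linarith)
  have hk : 0 < log t ^ (-α) := rpow_pos_of_pos (log_pos ht) _
  unfold caputoHadamardT
  exact mul_pos (by positivity) ((mul_pos hk (sub_pos.2 hlt)).trans_le hlower)

theorem IsLocalMax.deriv_deriv_nonpos {f : ℝ → ℝ} {a : ℝ} (hmax : IsLocalMax f a)
    (hf : ContinuousAt f a) : deriv (deriv f) a ≤ 0 := by
  by_contra! hpos
  have hmin := isLocalMin_of_deriv_deriv_pos hpos hmax.deriv_eq_zero hf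
  have hconst : f =ᶠ[𝓝 a] fun _ => f a := (hmax.and hmin).mono fun _ h => le_antisymm h.1 h.2
  have hderiv : deriv f =ᶠ[𝓝 a] fun _ => 0 := by simpa using hconst.deriv
  simp [hderiv.deriv_eq] at hpos

theorem laplacianX_sub {n : ℕ} {u v : (Fin n → ℝ) → ℝ → ℝ} {x : Fin n → ℝ} {t : ℝ}
    (hu : ContDiffAt ℝ 2 (fun y => u y t) x) (hv : ContDiffAt ℝ 2 (fun y => v y t) x) :
    laplacianX (fun y s => u y s - v y s) x t = laplacianX u x t - laplacianX v x t := by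
  unfold laplacianX
  rw [← Finset.sum_sub_distrib]
  refine Finset.sum_congr rfl fun j _ => ?_
  have hline : ContDiffAt ℝ 2 (Function.update x j) (x j) := (contDiff_update 2 x j).contDiffAt
  rw [← Function.update_eq_self j x] at hu hv
  exact iteratedDeriv_sub (hu.comp (x j) hline) (hv.comp (x j) hline)

theorem laplacianX_nonpos_of_isLocalMax {n : ℕ} {w : (Fin n → ℝ) → ℝ → ℝ} {x : Fin n → ℝ}
    {t : ℝ} (hmax : IsLocalMax (fun y => w y t) x) (hw : ContinuousAt (fun y => w y t) x) :
    laplacianX w x t ≤ 0 := by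
  refine Finset.sum_nonpos fun j _ => ?_
  have hline : ContinuousAt (Function.update x j) (x j) :=
    (continuous_const.update j continuous_id).continuousAt
  rw [← Function.update_eq_self j x] at hmax hw
  rw [iteratedDeriv_succ, iteratedDeriv_one]
  exact (hmax.comp_continuous hline).deriv_deriv_nonpos (hw.comp hline)

section Solution

variable {n : ℕ} {G : Set (Fin n → ℝ)} {T ν α : ℝ} {F : (Fin n → ℝ) → ℝ → ℝ → ℝ}
  {φ g₁ g₂ : (Fin n → ℝ) → ℝ} {ψ : (Fin n → ℝ) → ℝ → ℝ} {u u₁ u₂ : (Fin n → ℝ) → ℝ → ℝ}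

theorem IsSolutionNonlinearCH.continuousOn_initial (h : IsSolutionNonlinearCH G T ν α u F φ ψ)
    (hT : 1 ≤ T) : ContinuousOn φ (closure G) := by
  refine (h.1.comp (continuousOn_id.prodMk continuousOn_const) fun x hx => ?_).congr
    fun x hx => (h.2.2.2.2.1 x hx).symm
  exact ⟨hx, le_rfl, hT⟩

theorem sub_le_sub_initial_of_isMaxOn (hGopen : IsOpen G) (hν : 0 ≤ ν) (hα0 : 0 ≤ α)
    (hα1 : α < 1) (hFmono : ∀ x t, Antitone (F x t))
    (h₁ : IsSolutionNonlinearCH G T ν α u₁ F g₁ ψ) (h₂ : IsSolutionNonlinearCH G T ν α u₂ F g₂ ψ)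
    {x₀ : Fin n → ℝ} {t₀ : ℝ} (hx₀ : x₀ ∈ G) (ht₀ : t₀ ∈ Ioc 1 T)
    (hmax : IsMaxOn (fun p => u₁ p.1 p.2 - u₂ p.1 p.2) (closure G ×ˢ Icc 1 T) (x₀, t₀))
    (hnonneg : 0 ≤ u₁ x₀ t₀ - u₂ x₀ t₀) :
    u₁ x₀ t₀ - u₂ x₀ t₀ ≤ u₁ x₀ 1 - u₂ x₀ 1 := by
  obtain ⟨-, hu₁t, hu₁x, hpde₁, -, -⟩ := h₁
  obtain ⟨-, hu₂t, hu₂x, hpde₂, -, -⟩ := h₂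
  by_contra! hlt
  have hsub : Icc 1 t₀ ⊆ Icc 1 T := Icc_subset_Icc_right ht₀.2
  have hu₁ := (hu₁t x₀ hx₀).mono hsub
  have hu₂ := (hu₂t x₀ hx₀).mono hsub
  have hcaputo : 0 < caputoHadamardT α (fun y s => u₁ y s - u₂ y s) x₀ t₀ :=
    caputoHadamardT_pos_of_isMaxOn hα0 hα1 ht₀.1 (hu₁.sub hu₂)
      (fun s hs => hmax (show (x₀, s) ∈ _ from ⟨subset_closure hx₀, hs.1, hs.2.trans ht₀.2⟩)) hlt
  have hG : G ∈ 𝓝 x₀ := hGopen.mem_nhds hx₀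
  have hC₁ := (hu₁x t₀ ht₀).contDiffAt hG
  have hC₂ := (hu₂x t₀ ht₀).contDiffAt hG
  have hlaplacian : laplacianX (fun y s => u₁ y s - u₂ y s) x₀ t₀ ≤ 0 :=
    laplacianX_nonpos_of_isLocalMax
      (Filter.mem_of_superset hG fun y hy =>
        hmax (show (y, t₀) ∈ _ from ⟨subset_closure hy, ht₀.1.le, ht₀.2⟩))
      (hC₁.continuousAt.sub hC₂.continuousAt)
  rw [caputoHadamardT_sub hα0 hα1 ht₀.1 hu₁ hu₂, hpde₁ x₀ hx₀ t₀ ht₀, hpde₂ x₀ hx₀ t₀ ht₀]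
    at hcaputo
  rw [laplacianX_sub hC₁ hC₂] at hlaplacian
  have hF : F x₀ t₀ (u₁ x₀ t₀) ≤ F x₀ t₀ (u₂ x₀ t₀) := hFmono x₀ t₀ (by linarith)
  linarith [mul_nonpos_of_nonneg_of_nonpos hν hlaplacian]

theorem sub_le_of_initial_sub_le (hGopen : IsOpen G) (hGbdd : Bornology.IsBounded G)
    (hν : 0 ≤ ν) (hα0 : 0 ≤ α) (hα1 : α < 1) (hFmono : ∀ x t, Antitone (F x t))
    (h₁ : IsSolutionNonlinearCH G T ν α u₁ F g₁ ψ) (h₂ : IsSolutionNonlinearCH G T ν α u₂ F g₂ ψ)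
    {M : ℝ} (hM0 : 0 ≤ M) (hM : ∀ x ∈ closure G, g₁ x - g₂ x ≤ M) :
    ∀ x ∈ closure G, ∀ t ∈ Icc 1 T, u₁ x t - u₂ x t ≤ M := by
  intro x hx t ht
  obtain ⟨⟨x₀, t₀⟩, ⟨hx₀, ht₀⟩, hmax⟩ :=
    (hGbdd.isCompact_closure.prod isCompact_Icc).exists_isMaxOn ⟨(x, t), hx, ht⟩
      (h₁.1.sub h₂.1)
  refine (hmax (show (x, t) ∈ _ from ⟨hx, ht⟩)).trans ?_
  show u₁ x₀ t₀ - u₂ x₀ t₀ ≤ M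
  have hinitial : u₁ x₀ 1 - u₂ x₀ 1 ≤ M := by
    rw [h₁.2.2.2.2.1 x₀ hx₀, h₂.2.2.2.2.1 x₀ hx₀]
    exact hM x₀ hx₀
  rcases lt_or_ge (u₁ x₀ t₀ - u₂ x₀ t₀) 0 with hneg | hnonneg
  · linarith
  rcases ht₀.1.eq_or_lt with rfl | ht₀1
  · exact hinitial
  by_cases hx₀G : x₀ ∈ G
  · exact (sub_le_sub_initial_of_isMaxOn hGopen hν hα0 hα1 hFmono h₁ h₂ hx₀G ⟨ht₀1, ht₀.2⟩
      hmax hnonneg).trans hinitial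
  · have hfr : x₀ ∈ frontier G := hGopen.frontier_eq ▸ ⟨hx₀, hx₀G⟩
    rw [h₁.2.2.2.2.2 x₀ hfr t₀ ht₀, h₂.2.2.2.2.2 x₀ hfr t₀ ht₀, sub_self]
    exact hM0

end Solution

theorem stability_nonlinear_caputoHadamard_diffusion_general
    {n : ℕ} (G : Set (Fin n → ℝ)) (hGopen : IsOpen G)
    (hGbdd : Bornology.IsBounded G)
    (T ν α : ℝ) (hν : 0 < ν) (hα0 : 0 < α) (hα1 : α < 1)
    (F : (Fin n → ℝ) → ℝ → ℝ → ℝ)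
    (hFmono : ∀ x t, ∀ v w : ℝ, v ≤ w → F x t w ≤ F x t v)
    (g₁ g₂ : (Fin n → ℝ) → ℝ) (ψ : (Fin n → ℝ) → ℝ → ℝ)
    (u₁ u₂ : (Fin n → ℝ) → ℝ → ℝ)
    (h₁ : IsSolutionNonlinearCH G T ν α u₁ F g₁ ψ)
    (h₂ : IsSolutionNonlinearCH G T ν α u₂ F g₂ ψ) :
    ∀ x ∈ closure G, ∀ t ∈ Set.Icc (1:ℝ) T,
      |u₁ x t - u₂ x t| ≤ sSup ((fun x' => |g₁ x' - g₂ x'|) '' closure G) := by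
  intro x hx t ht
  have hT : 1 ≤ T := ht.1.trans ht.2
  have hbdd : BddAbove ((fun x' => |g₁ x' - g₂ x'|) '' closure G) :=
    (hGbdd.isCompact_closure.image_of_continuousOn
      ((h₁.continuousOn_initial hT).sub (h₂.continuousOn_initial hT)).abs).bddAbove
  have hsup : ∀ y ∈ closure G, |g₁ y - g₂ y| ≤ sSup ((fun x' => |g₁ x' - g₂ x'|) '' closure G) :=
    fun y hy => le_csSup hbdd ⟨y, hy, rfl⟩
  have hM0 := (abs_nonneg _).trans (hsup x hx)
  have hFanti : ∀ x t, Antitone (F x t) := fun x t _ _ => hFmono x t _ _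
  rw [abs_sub_le_iff]
  exact ⟨sub_le_of_initial_sub_le hGopen hGbdd hν.le hα0.le hα1 hFanti h₁ h₂ hM0
      (fun y hy => (le_abs_self _).trans (hsup y hy)) x hx t ht,
    sub_le_of_initial_sub_le hGopen hGbdd hν.le hα0.le hα1 hFanti h₂ h₁ hM0
      (fun y hy => (le_abs_self _).trans ((abs_sub_comm _ _).trans_le (hsup y hy))) x hx t ht⟩

theorem stability_nonlinear_caputoHadamard_diffusion
    {n : ℕ} (G : Set (Fin n → ℝ)) (hGopen : IsOpen G) (hGne : G.Nonempty)
    (hGbdd : Bornology.IsBounded G)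
    (T ν α : ℝ) (hT : 1 < T) (hν : 0 < ν) (hα0 : 0 < α) (hα1 : α < 1)
    (F : (Fin n → ℝ) → ℝ → ℝ → ℝ)
    (hFc : Continuous fun p : (Fin n → ℝ) × ℝ × ℝ => F p.1 p.2.1 p.2.2)
    (hFsmooth : ∀ x t, ContDiff ℝ 1 (F x t))
    (hFmono : ∀ x t, ∀ v w : ℝ, v ≤ w → F x t w ≤ F x t v)
    (g₁ g₂ : (Fin n → ℝ) → ℝ) (ψ : (Fin n → ℝ) → ℝ → ℝ)
    (u₁ u₂ : (Fin n → ℝ) → ℝ → ℝ)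
    (h₁ : IsSolutionNonlinearCH G T ν α u₁ F g₁ ψ)
    (h₂ : IsSolutionNonlinearCH G T ν α u₂ F g₂ ψ) :
    ∀ x ∈ closure G, ∀ t ∈ Set.Icc (1:ℝ) T,
      |u₁ x t - u₂ x t| ≤ sSup ((fun x' => |g₁ x' - g₂ x'|) '' closure G) :=
  stability_nonlinear_caputoHadamard_diffusion_general G hGopen hGbdd T ν α hν hα0 hα1 F hFmono g₁
    g₂ ψ u₁ u₂ h₁ h₂
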